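/- For a positive semidefinite σ and positive semidefinite ρ on ℂ^n with ρ ≪ σ, the operator R := √σ (√(√σ ρ √σ))⁺ √σ (with ⁺ the Moore–Penrose pseudoinverse) is positive semidefinite and satisfies R ρ R = σᵃ, the absolutely continuous part of σ with respect to ρ in the quantum Lebesgue decomposition. -/

import Mathlib

open Matrix
open scoped ComplexOrder

/-- The positive semidefinite square root of a positive semidefinite matrix
(junk value `0` on non-positive-semidefinite input). -/
noncomputable def msqrt {n : ℕ} (A : Matrix (Fin n) (Fin n) ℂ) : Matrix (Fin n) (Fin n) ℂ :=
  letI := Classical.propDecidable A.PosSemidef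
  if h : A.PosSemidef then
    h.1.eigenvectorUnitary.1 * diagonal ((↑) ∘ Real.sqrt ∘ h.1.eigenvalues) *
      (star h.1.eigenvectorUnitary : Matrix (Fin n) (Fin n) ℂ) else 0

/-- `μ ≪ ν`: the compression of `ν` to the support of `μ` is positive definite. -/
def AbsCont {n : ℕ} (μ ν : Matrix (Fin n) (Fin n) ℂ) : Prop :=
  ∀ x ∈ LinearMap.range μ.mulVecLin, x ≠ 0 → 0 < (star x ⬝ᵥ ν.mulVec x).re

/-- `G` is the Moore–Penrose generalized inverse of `A`. -/
def IsMoorePenroseInv {n : ℕ} (A G : Matrix (Fin n) (Fin n) ℂ) : Prop :=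
  A * G * A = A ∧ G * A * G = G ∧ (A * G)ᴴ = A * G ∧ (G * A)ᴴ = G * A

/-!
Write `s = √σ`, `S = √(s ρ s)` and `R = s G s`, so that `S² = s ρ s`. Since `S` is Hermitian, its
Moore–Penrose inverse `G` commutes with `S`, and `P = S G` is the orthogonal projection onto the
range of `S`. Hence `R ρ R = s G S² G s = s P s`, so that `σ - R ρ R = s (1 - P) s ≥ 0` and
`tr ((σ - R ρ R) ρ) = tr ((1 - P) S²) = 0`. A vector `x = s S z` in the range of `R ρ R` with
`x* ρ x = 0` has `ρ x = 0`, hence `S³ z = s ρ x = 0`, hence `S z = 0` and `x = 0`.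
-/

section

variable {n : ℕ}

lemma msqrt_eq_conjStarAlgAut {A : Matrix (Fin n) (Fin n) ℂ} (hA : A.PosSemidef) :
    msqrt A = Unitary.conjStarAlgAut ℂ _ hA.1.eigenvectorUnitary
      (diagonal ((↑) ∘ Real.sqrt ∘ hA.1.eigenvalues)) := by
  simp [msqrt, hA]

lemma posSemidef_msqrt (A : Matrix (Fin n) (Fin n) ℂ) : (msqrt A).PosSemidef := by
  by_cases hA : A.PosSemidef
  · rw [msqrt_eq_conjStarAlgAut hA, Unitary.conjStarAlgAut_apply, star_eq_conjTranspose]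
    refine PosSemidef.mul_mul_conjTranspose_same ?_ _
    exact posSemidef_diagonal_iff.mpr fun i ↦ Complex.zero_le_real.mpr (Real.sqrt_nonneg _)
  · simpa [msqrt, hA] using PosSemidef.zero

lemma msqrt_mul_self {A : Matrix (Fin n) (Fin n) ℂ} (hA : A.PosSemidef) :
    msqrt A * msqrt A = A := by
  conv_rhs => rw [hA.1.spectral_theorem]
  rw [msqrt_eq_conjStarAlgAut hA, ← map_mul, diagonal_mul_diagonal]
  congr 2
  funext i
  simp [← Complex.ofReal_mul, Real.mul_self_sqrt (hA.eigenvalues_nonneg i)]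

lemma absCont_of_mulVec_eq_zero {μ ν : Matrix (Fin n) (Fin n) ℂ} (hν : ν.PosSemidef)
    (h : ∀ x ∈ LinearMap.range μ.mulVecLin, ν *ᵥ x = 0 → x = 0) : AbsCont μ ν := by
  intro x hx hx0
  have hnonneg := hν.dotProduct_mulVec_nonneg x
  refine (Complex.le_def.mp hnonneg).1.lt_of_ne fun hre ↦ hx0 (h x hx ?_)
  refine (hν.dotProduct_mulVec_zero_iff x).mp (Complex.ext hre.symm ?_)
  exact (Complex.le_def.mp hnonneg).2.symm

namespace IsMoorePenroseInv

variable {A G G' : Matrix (Fin n) (Fin n) ℂ}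

lemma conjTranspose (h : IsMoorePenroseInv A G) : IsMoorePenroseInv Aᴴ Gᴴ := by
  obtain ⟨h₁, h₂, h₃, h₄⟩ := h
  refine ⟨?_, ?_, ?_, ?_⟩
  · simpa only [conjTranspose_mul, mul_assoc] using congrArg Matrix.conjTranspose h₁
  · simpa only [conjTranspose_mul, mul_assoc] using congrArg Matrix.conjTranspose h₂
  · rw [← conjTranspose_mul, h₄, h₄]
  · rw [← conjTranspose_mul, h₃, h₃]

lemma unique (h : IsMoorePenroseInv A G) (h' : IsMoorePenroseInv A G') : G = G' := by
  obtain ⟨h₁, h₂, h₃, h₄⟩ := h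
  obtain ⟨h₁', h₂', h₃', h₄'⟩ := h'
  have hAG : A * G = A * G' := by
    calc A * G = A * G' * A * G := by rw [h₁']
    _ = (A * G')ᴴ * (A * G)ᴴ := by rw [h₃, h₃', mul_assoc (A * G')]
    _ = (A * G * A * G')ᴴ := by simp only [conjTranspose_mul, mul_assoc]
    _ = A * G' := by rw [h₁, h₃']
  have hGA : G * A = G' * A := by
    calc G * A = G * (A * G' * A) := by rw [h₁']
    _ = (G * A)ᴴ * (G' * A)ᴴ := by rw [h₄, h₄']; simp only [mul_assoc]
    _ = (G' * (A * G * A))ᴴ := by simp only [conjTranspose_mul, mul_assoc]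
    _ = G' * A := by rw [h₁, h₄']
  calc G = G * A * G := h₂.symm
  _ = G' * A * G' := by rw [hGA, mul_assoc, hAG, ← mul_assoc]
  _ = G' := h₂'

lemma isHermitian (h : IsMoorePenroseInv A G) (hA : A.IsHermitian) : G.IsHermitian :=
  (hA.eq ▸ h.conjTranspose).unique h

lemma commute (h : IsMoorePenroseInv A G) (hA : A.IsHermitian) : Commute G A := by
  rw [Commute, SemiconjBy, ← h.2.2.2, conjTranspose_mul, hA.eq, (h.isHermitian hA).eq]

lemma posSemidef (h : IsMoorePenroseInv A G) (hA : A.PosSemidef) : G.PosSemidef := by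
  simpa only [(h.isHermitian hA.1).eq, h.2.1] using hA.conjTranspose_mul_mul_same G

lemma mul_mul_self_mul (h : IsMoorePenroseInv A G) (hA : A.IsHermitian) :
    G * (A * A) * G = A * G := by
  calc G * (A * A) * G = (A * G) * A * G := by rw [← mul_assoc, (h.commute hA).eq]
  _ = A * G := by rw [h.1]

lemma posSemidef_one_sub_mul (h : IsMoorePenroseInv A G) : (1 - A * G).PosSemidef := by
  have hQ : (1 - A * G)ᴴ = 1 - A * G := by rw [conjTranspose_sub, conjTranspose_one, h.2.2.1]
  have hQQ : (1 - A * G) * (1 - A * G) = 1 - A * G := by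
    rw [sub_mul, one_mul, mul_sub, mul_one, ← mul_assoc, h.1]; abel
  have := posSemidef_conjTranspose_mul_self (1 - A * G)
  rwa [hQ, hQQ] at this

lemma one_sub_mul_mul_self (h : IsMoorePenroseInv A G) : (1 - A * G) * A = 0 := by
  rw [sub_mul, one_mul, h.1, sub_self]

end IsMoorePenroseInv

variable {ρ s S G : Matrix (Fin n) (Fin n) ℂ}

lemma mul_mul_mul_eq_of_mul_self_eq (hS : S.IsHermitian) (hSS : S * S = s * ρ * s)
    (hG : IsMoorePenroseInv S G) : (s * G * s) * ρ * (s * G * s) = s * (S * G) * s := by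
  calc (s * G * s) * ρ * (s * G * s) = s * (G * (s * ρ * s) * G) * s := by
        simp only [mul_assoc]
  _ = s * (S * G) * s := by rw [← hSS, hG.mul_mul_self_mul hS]

lemma absCont_mul_mul_of_mul_self_eq (hρ : ρ.PosSemidef) (hS : S.IsHermitian)
    (hSS : S * S = s * ρ * s) (M : Matrix (Fin n) (Fin n) ℂ) : AbsCont (s * S * M) ρ := by
  refine absCont_of_mulVec_eq_zero hρ ?_
  rintro _ ⟨w, rfl⟩ hρx
  simp only [mulVecLin_apply, ← mulVec_mulVec] at hρx ⊢
  have hSSS : S *ᵥ (S *ᵥ (S *ᵥ (M *ᵥ w))) = 0 := by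
    calc S *ᵥ (S *ᵥ (S *ᵥ (M *ᵥ w))) = s *ᵥ (ρ *ᵥ (s *ᵥ (S *ᵥ (M *ᵥ w)))) := by
          rw [mulVec_mulVec, hSS]; simp only [← mulVec_mulVec]
    _ = 0 := by rw [hρx, mulVec_zero]
  have hSz : S *ᵥ (M *ᵥ w) = 0 := by
    rw [← conjTranspose_mul_self_mulVec_eq_zero, hS.eq, ← mulVec_mulVec,
      ← conjTranspose_mul_self_mulVec_eq_zero, hS.eq, ← mulVec_mulVec, hSSS]
  rw [hSz, mulVec_zero]

lemma posSemidef_mul_one_sub_mul_mul (hs : s.IsHermitian) (hG : IsMoorePenroseInv S G) :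
    (s * (1 - S * G) * s).PosSemidef := by
  simpa only [hs.eq] using hG.posSemidef_one_sub_mul.conjTranspose_mul_mul_same s

lemma trace_mul_one_sub_mul_mul_mul_eq_zero (hSS : S * S = s * ρ * s)
    (hG : IsMoorePenroseInv S G) : (s * (1 - S * G) * s * ρ).trace = 0 := by
  calc (s * (1 - S * G) * s * ρ).trace = ((1 - S * G) * (s * ρ * s)).trace := by
        rw [show s * (1 - S * G) * s * ρ = s * ((1 - S * G) * s * ρ) by simp only [mul_assoc],
          trace_mul_comm]
        simp only [mul_assoc]
  _ = 0 := by rw [← hSS, ← mul_assoc, hG.one_sub_mul_mul_self, zero_mul, trace_zero]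

end

theorem pseudoinverse_formula_ac_part_general {n : ℕ}
    (ρ σ G : Matrix (Fin n) (Fin n) ℂ)
    (hρ : ρ.PosSemidef) (hσ : σ.PosSemidef)
    (hG : IsMoorePenroseInv (msqrt (msqrt σ * ρ * msqrt σ)) G) :
    (msqrt σ * G * msqrt σ).PosSemidef ∧
    AbsCont ((msqrt σ * G * msqrt σ) * ρ * (msqrt σ * G * msqrt σ)) ρ ∧
    (σ - (msqrt σ * G * msqrt σ) * ρ * (msqrt σ * G * msqrt σ)).PosSemidef ∧
    ((σ - (msqrt σ * G * msqrt σ) * ρ * (msqrt σ * G * msqrt σ)) * ρ).trace = 0 := by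
  set s := msqrt σ
  set S := msqrt (s * ρ * s)
  have hs : s.IsHermitian := (posSemidef_msqrt σ).1
  have hS : S.PosSemidef := posSemidef_msqrt _
  have hSS : S * S = s * ρ * s :=
    msqrt_mul_self (by simpa only [hs.eq] using hρ.conjTranspose_mul_mul_same s)
  have hRρR := mul_mul_mul_eq_of_mul_self_eq hS.1 hSS hG
  have hσ_sub : σ - (s * G * s) * ρ * (s * G * s) = s * (1 - S * G) * s := by
    rw [hRρR, ← msqrt_mul_self hσ, mul_sub, sub_mul, mul_one]
  refine ⟨?_, ?_, ?_, ?_⟩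
  · simpa only [hs.eq] using (hG.posSemidef hS).conjTranspose_mul_mul_same s
  · rw [hRρR]
    simpa only [mul_assoc] using absCont_mul_mul_of_mul_self_eq hρ hS.1 hSS (G * s)
  · exact hσ_sub ▸ posSemidef_mul_one_sub_mul_mul hs hG
  · rw [hσ_sub, trace_mul_one_sub_mul_mul_mul_eq_zero hSS hG]

/-- With `ρ ≪ σ`, the operator `R := √σ (√(√σ ρ √σ))⁺ √σ` is positive semidefinite and
`R ρ R` is the absolutely continuous part `σᵃ` of `σ` with respect to `ρ`: that is,
`R ρ R ≪ ρ`, and the remainder `σ − R ρ R` is positive semidefinite and singular with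
respect to `ρ`. -/
theorem pseudoinverse_formula_ac_part {n : ℕ}
    (ρ σ G : Matrix (Fin n) (Fin n) ℂ)
    (hρ : ρ.PosSemidef) (hσ : σ.PosSemidef) (hρ0 : ρ ≠ 0) (hσ0 : σ ≠ 0)
    (hAC : AbsCont ρ σ)
    (hG : IsMoorePenroseInv (msqrt (msqrt σ * ρ * msqrt σ)) G) :
    (msqrt σ * G * msqrt σ).PosSemidef ∧
    AbsCont ((msqrt σ * G * msqrt σ) * ρ * (msqrt σ * G * msqrt σ)) ρ ∧
    (σ - (msqrt σ * G * msqrt σ) * ρ * (msqrt σ * G * msqrt σ)).PosSemidef ∧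
    ((σ - (msqrt σ * G * msqrt σ) * ρ * (msqrt σ * G * msqrt σ)) * ρ).trace = 0 :=
  pseudoinverse_formula_ac_part_general ρ σ G hρ hσ hG
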